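/- arXiv:1212.1149 — 3 statements merged into one kernel-verified Lean document; each statement's English description precedes it below -/
import Mathlib

section
/- Let A = [a_ij] be the n×n zero-one adjacency matrix (with zero diagonal) of a loopless digraph G on vertices v_1,…,v_n, with out-degrees α_i^+ = Σ_j a_ij and in-degrees α_j^- = Σ_i a_ij, and suppose the degree sequence α = ((α_1^+,α_1^-),…,(α_n^+,α_n^-)) is in positive lexicographic order. Then the following are equivalent: (1) A is the unique zero-one matrix with zero diagonal having row sums (α_1^+,…,α_n^+) and column sums (α_1^-,…,α_n^-); (2) G contains no 2-switch and no induced directed 3-cycle; (3) for every triple of distinct indices i, j, k with i < j, a_jk = 1 implies a_ik = 1; (4) for every k with 1 ≤ k ≤ n, Σ_{i=1}^k min(α_i^-, k−1) + Σ_{i=k+1}^n min(α_i^-, k) = Σ_{i=1}^k α_i^+. -/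
/-- `A` is a zero-one matrix. -/
def ZeroOne (n : ℕ) (A : Fin n → Fin n → ℕ) : Prop :=
  ∀ i j, A i j = 0 ∨ A i j = 1

/-- `A` has zero diagonal (no loops). -/
def ZeroDiag (n : ℕ) (A : Fin n → Fin n → ℕ) : Prop :=
  ∀ i, A i i = 0

/-- Out-degree of vertex `i` (row sum). -/
def outdeg (n : ℕ) (A : Fin n → Fin n → ℕ) (i : Fin n) : ℕ := ∑ j, A i j

/-- In-degree of vertex `j` (column sum). -/
def indeg (n : ℕ) (A : Fin n → Fin n → ℕ) (j : Fin n) : ℕ := ∑ i, A i j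

/-- `G` contains a 2-switch: four distinct vertices `w,x,y,z` with arcs `(w,x)`, `(y,z)`
and non-arcs `(w,z)`, `(y,x)`. -/
def HasTwoSwitch (n : ℕ) (A : Fin n → Fin n → ℕ) : Prop :=
  ∃ w x y z : Fin n, w ≠ x ∧ w ≠ y ∧ w ≠ z ∧ x ≠ y ∧ x ≠ z ∧ y ≠ z ∧
    A w x = 1 ∧ A y z = 1 ∧ A w z = 0 ∧ A y x = 0

/-- `G` contains an induced directed 3-cycle on three distinct vertices `x,y,z`. -/
def HasInducedC3 (n : ℕ) (A : Fin n → Fin n → ℕ) : Prop :=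
  ∃ x y z : Fin n, x ≠ y ∧ x ≠ z ∧ y ≠ z ∧
    A x y = 1 ∧ A y z = 1 ∧ A z x = 1 ∧
    A y x = 0 ∧ A z y = 0 ∧ A x z = 0

/-- The degree sequence `(p i, m i)` is in positive lexicographic order. -/
def PosLex (n : ℕ) (p m : Fin n → ℕ) : Prop :=
  ∀ i j : Fin n, (i : ℕ) + 1 = (j : ℕ) →
    p j ≤ p i ∧ (p i = p j → m j ≤ m i)

/-- Condition (3): for distinct `i, j, k` with `i < j`, `a_{jk} = 1` implies `a_{ik} = 1`. -/
def Nested (n : ℕ) (A : Fin n → Fin n → ℕ) : Prop :=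
  ∀ i j k : Fin n, i ≠ j → i ≠ k → j ≠ k → i < j → A j k = 1 → A i k = 1

/-- `A` is the unique zero-one matrix with zero diagonal having its row and column sums. -/
def UniqueRealization (n : ℕ) (A : Fin n → Fin n → ℕ) : Prop :=
  ∀ B : Fin n → Fin n → ℕ, ZeroOne n B → ZeroDiag n B →
    (∀ i, outdeg n B i = outdeg n A i) → (∀ j, indeg n B j = indeg n A j) → B = A

/-!
(1) ⇒ (2): a 2-switch or an induced directed 3-cycle is an alternating cycle of arcs and
non-arcs; exchanging them gives a second realization of the degree sequence.

(2) ⇒ (3): if `i < j`, `a_jk = 1` and `a_ik = 0`, the absence of 2-switches and the order of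
the out-degrees force `a_ij = 1`, `a_ji = 0` and equal out-degrees; the order of the in-degrees
then yield a vertex `l` with `a_li = 1` and `a_lj = 0`, and whether `l = k`, `a_lk = 0` or
`a_lk = 1`, this creates an induced 3-cycle or a 2-switch.

(3) ⇔ (4) ⇒ (1): the number of arcs into `j` from the first `k` vertices is at most
`min (α_j⁻, k - [j < k])`, and these counts sum to `α_1⁺ + ⋯ + α_k⁺`. So (4) says that every bound
is attained, which (3) guarantees; and attained bounds determine all the counts, hence the matrix.
-/

open Finset

section CycleSwitch

variable {n m : ℕ}

open Classical in
/-- Exchanges the arcs `(r i, c i)` for the non-arcs `(r i, c (σ i))`: each row `r i` loses one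
arc and gains one, and since `σ` is a bijection, so does each column. -/
noncomputable def cycleSwitch (A : Fin n → Fin n → ℕ) (σ : Equiv.Perm (Fin m))
    (r c : Fin m → Fin n) : Fin n → Fin n → ℕ := fun a b =>
  if ∃ i, a = r i ∧ b = c (σ i) then 1 else if ∃ i, a = r i ∧ b = c i then 0 else A a b

lemma sum_ite_eq_ite_exists {r : Fin m → Fin n} (hr : Function.Injective r) (a : Fin n)
    (P : Fin m → Prop) [DecidablePred P] [Decidable (∃ i, a = r i ∧ P i)] :
    (∑ i, if a = r i ∧ P i then 1 else 0) = if ∃ i, a = r i ∧ P i then 1 else 0 := by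
  split_ifs with h
  · obtain ⟨i₀, rfl, hP⟩ := h
    rw [Fintype.sum_eq_single i₀ fun i hi => if_neg fun h => hi (hr h.1).symm]
    simp [hP]
  · exact sum_eq_zero fun i _ => if_neg fun hi => h ⟨i, hi⟩

variable {A : Fin n → Fin n → ℕ} {σ : Equiv.Perm (Fin m)} {r c : Fin m → Fin n}

lemma cycleSwitch_add_sum (hr : Function.Injective r) (hA1 : ∀ i, A (r i) (c i) = 1)
    (hA0 : ∀ i, A (r i) (c (σ i)) = 0) (a b : Fin n) :
    cycleSwitch A σ r c a b + ∑ i, (if a = r i ∧ b = c i then 1 else 0)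
      = A a b + ∑ i, (if a = r i ∧ b = c (σ i) then 1 else 0) := by
  classical
  rw [sum_ite_eq_ite_exists hr, sum_ite_eq_ite_exists hr, cycleSwitch]
  have hadd : (∃ i, a = r i ∧ b = c (σ i)) → A a b = 0 := by rintro ⟨i, rfl, rfl⟩; exact hA0 i
  have hrem : (∃ i, a = r i ∧ b = c i) → A a b = 1 := by rintro ⟨i, rfl, rfl⟩; exact hA1 i
  split_ifs <;> simp_all

lemma outdeg_cycleSwitch (hr : Function.Injective r) (hA1 : ∀ i, A (r i) (c i) = 1)
    (hA0 : ∀ i, A (r i) (c (σ i)) = 0) (a : Fin n) :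
    outdeg n (cycleSwitch A σ r c) a = outdeg n A a := by
  have hrow : ∀ f : Fin m → Fin n,
      ∑ b, ∑ i, (if a = r i ∧ b = f i then 1 else 0) = ∑ i, if a = r i then 1 else 0 := by
    intro f
    rw [sum_comm]
    simp [ite_and]
  have h := sum_congr rfl fun b (_ : b ∈ univ) => cycleSwitch_add_sum hr hA1 hA0 a b
  simp only [sum_add_distrib, hrow] at h
  exact Nat.add_right_cancel h

lemma indeg_cycleSwitch (hr : Function.Injective r) (hA1 : ∀ i, A (r i) (c i) = 1)
    (hA0 : ∀ i, A (r i) (c (σ i)) = 0) (b : Fin n) :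
    indeg n (cycleSwitch A σ r c) b = indeg n A b := by
  have hcol : ∀ f : Fin m → Fin n,
      ∑ a, ∑ i, (if a = r i ∧ b = f i then 1 else 0) = ∑ i, if b = f i then 1 else 0 := by
    intro f
    rw [sum_comm]
    simp [ite_and]
  have h := sum_congr rfl fun a (_ : a ∈ univ) => cycleSwitch_add_sum hr hA1 hA0 a b
  simp only [sum_add_distrib, hcol] at h
  rw [Equiv.sum_comp σ (fun i => if b = c i then 1 else 0)] at h
  exact Nat.add_right_cancel h

lemma not_uniqueRealization_of_alternating_cycle [NeZero m] (h01 : ZeroOne n A)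
    (hdiag : ZeroDiag n A) (hr : Function.Injective r) (hA1 : ∀ i, A (r i) (c i) = 1)
    (hA0 : ∀ i, A (r i) (c (σ i)) = 0) (hloop : ∀ i, r i ≠ c (σ i)) :
    ¬ UniqueRealization n A := by
  classical
  intro hU
  have hB01 : ZeroOne n (cycleSwitch A σ r c) := fun a b => by
    unfold cycleSwitch; split_ifs <;> simp [h01 a b]
  have hBdiag : ZeroDiag n (cycleSwitch A σ r c) := fun a => by
    unfold cycleSwitch
    split_ifs with hadd
    · obtain ⟨i, hi, hc⟩ := hadd
      exact absurd (hi.symm.trans hc) (hloop i)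
    · rfl
    · exact hdiag a
  have hBA := hU _ hB01 hBdiag (outdeg_cycleSwitch hr hA1 hA0) (indeg_cycleSwitch hr hA1 hA0)
  have h1 : cycleSwitch A σ r c (r 0) (c (σ 0)) = 1 := if_pos ⟨0, rfl, rfl⟩
  rw [hBA, hA0] at h1
  exact zero_ne_one h1

end CycleSwitch

lemma not_hasTwoSwitch_of_uniqueRealization {n : ℕ} {A : Fin n → Fin n → ℕ}
    (h01 : ZeroOne n A) (hdiag : ZeroDiag n A) (hU : UniqueRealization n A) :
    ¬ HasTwoSwitch n A := by
  rintro ⟨w, x, y, z, hwx, hwy, hwz, hxy, hxz, hyz, hwx1, hyz1, hwz0, hyx0⟩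
  refine not_uniqueRealization_of_alternating_cycle (σ := Equiv.swap 0 1)
    (r := ![w, y]) (c := ![x, z]) h01 hdiag ?_ ?_ ?_ ?_ hU
  · intro i j; fin_cases i <;> fin_cases j <;> simp [hwy, hwy.symm]
  all_goals intro i; fin_cases i <;> simp [*, hxy.symm]

lemma not_hasInducedC3_of_uniqueRealization {n : ℕ} {A : Fin n → Fin n → ℕ}
    (h01 : ZeroOne n A) (hdiag : ZeroDiag n A) (hU : UniqueRealization n A) :
    ¬ HasInducedC3 n A := by
  rintro ⟨x, y, z, hxy, hxz, hyz, hxy1, hyz1, hzx1, hyx0, hzy0, hxz0⟩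
  refine not_uniqueRealization_of_alternating_cycle (σ := finRotate 3)
    (r := ![x, y, z]) (c := ![y, z, x]) h01 hdiag ?_ ?_ ?_ ?_ hU
  · intro i j; fin_cases i <;> fin_cases j <;> simp [hxy, hxz, hyz, hxy.symm, hxz.symm, hyz.symm]
  all_goals intro i; fin_cases i <;> simp [*, hxy.symm, hyz.symm]

lemma PosLex.antitone {n : ℕ} {p m : Fin n → ℕ} (h : PosLex n p m) :
    Antitone fun i => toLex (p i, m i) := by
  cases n with
  | zero => exact fun i => i.elim0
  | succ n =>
    refine Fin.antitone_iff_succ_le.2 fun i => ?_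
    obtain ⟨hp, hm⟩ := h i.castSucc i.succ (by simp)
    exact Prod.Lex.toLex_le_toLex.2 (hp.lt_or_eq.imp_right fun he => ⟨he, hm he.symm⟩)

section NoSwitch

variable {n : ℕ} {A : Fin n → Fin n → ℕ}

lemma sum_eq_sum_compl_add_triple {ι M : Type*} [Fintype ι] [DecidableEq ι] [AddCommMonoid M]
    {i j k : ι} (hij : i ≠ j) (hik : i ≠ k) (hjk : j ≠ k) (f : ι → M) :
    ∑ l, f l = ∑ l ∈ ({i, j, k} : Finset ι)ᶜ, f l + (f i + (f j + f k)) := by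
  rw [← sum_compl_add_sum {i, j, k}, sum_insert (by simp [hij, hik]), sum_pair hjk]

lemma sum_eq_sum_compl_add_pair {ι M : Type*} [Fintype ι] [DecidableEq ι] [AddCommMonoid M]
    {i j : ι} (hij : i ≠ j) (f : ι → M) :
    ∑ l, f l = ∑ l ∈ ({i, j} : Finset ι)ᶜ, f l + (f i + f j) := by
  rw [← sum_compl_add_sum {i, j}, sum_pair hij]

/-- Without 2-switches, a non-arc `(i, k)` next to an arc `(j, k)` forces the out-neighbourhood
of `i` into that of `j` away from `i, j, k`; so if `i` has the larger out-degree it must gain the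
difference from the arc `(i, j)`. -/
lemma arc_and_outdeg_eq_of_not_hasTwoSwitch (h01 : ZeroOne n A) (hdiag : ZeroDiag n A)
    (hsw : ¬ HasTwoSwitch n A) {i j k : Fin n} (hij : i ≠ j) (hik : i ≠ k) (hjk : j ≠ k)
    (hjk1 : A j k = 1) (hik0 : A i k = 0) (hout : outdeg n A j ≤ outdeg n A i) :
    A i j = 1 ∧ A j i = 0 ∧ outdeg n A i = outdeg n A j := by
  have hrow : ∀ l ∈ ({i, j, k} : Finset (Fin n))ᶜ, A i l ≤ A j l := by
    intro l hl
    simp only [mem_compl, mem_insert, mem_singleton, not_or] at hl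
    by_contra! hlt
    have := h01 i l
    have := h01 j l
    exact hsw ⟨i, l, j, k, Ne.symm hl.1, hij, hik, hl.2.1, hl.2.2, hjk, by omega, hjk1, hik0,
      by omega⟩
  have hrest := sum_le_sum hrow
  have hi := sum_eq_sum_compl_add_triple hij hik hjk (A i)
  have hj := sum_eq_sum_compl_add_triple hij hik hjk (A j)
  unfold outdeg at hout ⊢
  rw [hdiag, hik0] at hi
  rw [hdiag, hjk1] at hj
  rcases h01 i j with h | h <;> omega

lemma exists_arc_not_of_indeg_le (h01 : ZeroOne n A) (hdiag : ZeroDiag n A) {i j : Fin n}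
    (hij : i ≠ j) (hij1 : A i j = 1) (hji0 : A j i = 0) (hin : indeg n A j ≤ indeg n A i) :
    ∃ l, l ≠ i ∧ l ≠ j ∧ A l i = 1 ∧ A l j = 0 := by
  have hi := sum_eq_sum_compl_add_pair hij fun l => A l i
  have hj := sum_eq_sum_compl_add_pair hij fun l => A l j
  unfold indeg at hin
  simp only [hdiag i, hdiag j, hij1, hji0] at hi hj
  obtain ⟨l, hl, hlt⟩ := exists_lt_of_sum_lt (s := ({i, j} : Finset (Fin n))ᶜ)
    (f := fun l => A l j) (g := fun l => A l i) (by omega)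
  simp only [mem_compl, mem_insert, mem_singleton, not_or] at hl
  have := h01 l i
  have := h01 l j
  exact ⟨l, hl.1, hl.2, by omega, by omega⟩

lemma nested_of_not_hasTwoSwitch (h01 : ZeroOne n A) (hdiag : ZeroDiag n A)
    (hlex : PosLex n (outdeg n A) (indeg n A)) (hsw : ¬ HasTwoSwitch n A)
    (hc3 : ¬ HasInducedC3 n A) : Nested n A := by
  intro i j k hij hik hjk hlt hjk1
  by_contra hik1
  have hik0 : A i k = 0 := (h01 i k).resolve_right hik1
  have hdeg := Prod.Lex.toLex_le_toLex.1 (hlex.antitone hlt.le)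
  obtain ⟨hij1, hji0, hout⟩ := arc_and_outdeg_eq_of_not_hasTwoSwitch h01 hdiag hsw hij hik hjk
    hjk1 hik0 (by dsimp only at hdeg; omega)
  obtain ⟨l, hli, hlj, hli1, hlj0⟩ :=
    exists_arc_not_of_indeg_le h01 hdiag hij hij1 hji0 (by dsimp only at hdeg; omega)
  by_cases hlk : l = k
  · subst hlk
    exact hc3 ⟨i, j, l, hij, hik, hjk, hij1, hjk1, hli1, hji0, hlj0, hik0⟩
  · rcases h01 l k with hlk0 | hlk1
    · exact hsw ⟨l, i, j, k, hli, hlj, hlk, hij, hik, hjk, hli1, hjk1, hlk0, hji0⟩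
    · exact hsw ⟨l, k, i, j, hlk, hli, hlj, Ne.symm hik, Ne.symm hjk, hij, hlk1, hij1,
        hlj0, hik0⟩

end NoSwitch
section PrefixIndeg

variable {n : ℕ}

def prefixIndeg (A : Fin n → Fin n → ℕ) (k : ℕ) (j : Fin n) : ℕ :=
  ∑ i ∈ ({i | (i : ℕ) < k} : Finset (Fin n)), A i j

/-- The largest value `prefixIndeg A k j` can take when `j` has in-degree `m j`: at most one arc
comes from each of the first `k` vertices other than `j`. -/
def prefixCap (m : Fin n → ℕ) (k : ℕ) (j : Fin n) : ℕ :=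
  if (j : ℕ) < k then min (m j) (k - 1) else min (m j) k

lemma card_prefix_erase {k : ℕ} (hk : k ≤ n) (j : Fin n) :
    #(({i | (i : ℕ) < k} : Finset (Fin n)).erase j) = if (j : ℕ) < k then k - 1 else k := by
  have hcard : #({i | (i : ℕ) < k} : Finset (Fin n)) = k := by
    rw [Fin.card_filter_val_lt, min_eq_right hk]
  split_ifs with hj
  · rw [card_erase_of_mem (by simpa using hj), hcard]
  · rw [erase_eq_of_notMem (by simpa using hj), hcard]

lemma prefixCap_eq_min_card (m : Fin n → ℕ) {k : ℕ} (hk : k ≤ n) (j : Fin n) :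
    prefixCap m k j = min (m j) #(({i | (i : ℕ) < k} : Finset (Fin n)).erase j) := by
  rw [card_prefix_erase hk, prefixCap]
  split_ifs <;> rfl

variable {A : Fin n → Fin n → ℕ}

lemma prefixIndeg_le_indeg (k : ℕ) (j : Fin n) : prefixIndeg A k j ≤ indeg n A j :=
  sum_le_sum_of_subset (subset_univ _)

lemma prefixIndeg_eq_sum_erase (hdiag : ZeroDiag n A) (k : ℕ) (j : Fin n) :
    prefixIndeg A k j = ∑ i ∈ ({i | (i : ℕ) < k} : Finset (Fin n)).erase j, A i j := by
  by_cases hj : (j : ℕ) < k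
  · rw [prefixIndeg, ← add_sum_erase _ _ (by simpa using hj), hdiag, zero_add]
  · rw [prefixIndeg, erase_eq_of_notMem (by simpa using hj)]

lemma prefixIndeg_le_prefixCap (h01 : ZeroOne n A) (hdiag : ZeroDiag n A) {k : ℕ} (hk : k ≤ n)
    (j : Fin n) : prefixIndeg A k j ≤ prefixCap (indeg n A) k j := by
  rw [prefixCap_eq_min_card _ hk, prefixIndeg_eq_sum_erase hdiag, card_eq_sum_ones]
  exact le_min ((prefixIndeg_eq_sum_erase hdiag k j).symm ▸ prefixIndeg_le_indeg k j)
    (sum_le_sum fun i _ => (h01 i j).elim (·.le.trans zero_le_one) (·.le))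

lemma sum_prefixIndeg (A : Fin n → Fin n → ℕ) (k : ℕ) :
    ∑ j, prefixIndeg A k j = ∑ i : Fin n, if (i : ℕ) < k then outdeg n A i else 0 := by
  rw [← sum_filter]
  exact sum_comm

lemma prefixIndeg_eq_prefixCap_of_sum_eq (h01 : ZeroOne n A) (hdiag : ZeroDiag n A) {k : ℕ}
    (hk : k ≤ n)
    (hsum : ∑ j, prefixCap (indeg n A) k j
      = ∑ i : Fin n, if (i : ℕ) < k then outdeg n A i else 0) (j : Fin n) :
    prefixIndeg A k j = prefixCap (indeg n A) k j :=
  (sum_eq_sum_iff_of_le fun j _ => prefixIndeg_le_prefixCap h01 hdiag hk j).1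
    (by rw [sum_prefixIndeg, hsum]) j (mem_univ j)

/-- If some vertex outside the first `k` sends an arc to `j`, nestedness makes every one of
the first `k` vertices other than `j` do so; otherwise all arcs into `j` are counted. -/
lemma prefixIndeg_eq_prefixCap_of_nested (h01 : ZeroOne n A) (hdiag : ZeroDiag n A)
    (h3 : Nested n A) {k : ℕ} (hk : k ≤ n) (j : Fin n) :
    prefixIndeg A k j = prefixCap (indeg n A) k j := by
  refine (prefixIndeg_le_prefixCap h01 hdiag hk j).antisymm ?_
  rw [prefixCap_eq_min_card _ hk]
  by_cases hlate : ∃ l : Fin n, k ≤ (l : ℕ) ∧ A l j = 1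
  · obtain ⟨l, hkl, hl1⟩ := hlate
    have hlj : l ≠ j := fun h => by rw [h, hdiag] at hl1; exact zero_ne_one hl1
    refine min_le_of_right_le ?_
    rw [prefixIndeg_eq_sum_erase hdiag, card_eq_sum_ones]
    refine sum_le_sum fun i hi => ?_
    simp only [mem_erase, mem_filter, mem_univ, true_and] at hi
    have hil : i < l := Fin.lt_def.2 (by omega)
    exact (h3 i l j hil.ne hi.1 hlj hil hl1).ge
  · push Not at hlate
    refine min_le_of_left_le (sum_le_sum_of_ne_zero fun i _ hi => ?_)
    simp only [mem_filter, mem_univ, true_and]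
    by_contra! hki
    exact hi ((h01 i j).resolve_right (hlate i hki))

lemma prefixIndeg_succ (A : Fin n → Fin n → ℕ) (i j : Fin n) :
    prefixIndeg A (i + 1) j = prefixIndeg A i j + A i j := by
  have : ({l | (l : ℕ) < i + 1} : Finset (Fin n)) = insert i ({l | (l : ℕ) < i} : Finset (Fin n)) := by
    ext l
    simp only [mem_filter, mem_univ, true_and, mem_insert, Fin.ext_iff]
    omega
  rw [prefixIndeg, this, sum_insert (by simp), add_comm]
  rfl

lemma eq_of_prefixIndeg_eq {B : Fin n → Fin n → ℕ}
    (h : ∀ k ≤ n, ∀ j, prefixIndeg A k j = prefixIndeg B k j) : A = B := by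
  funext i j
  have hA := prefixIndeg_succ A i j
  have hB := prefixIndeg_succ B i j
  rw [h (i + 1) i.isLt j, h i i.isLt.le j] at hA
  omega

lemma uniqueRealization_of_sum_prefixCap (h01 : ZeroOne n A) (hdiag : ZeroDiag n A)
    (h4 : ∀ k, 1 ≤ k → k ≤ n → ∑ j, prefixCap (indeg n A) k j
      = ∑ i : Fin n, if (i : ℕ) < k then outdeg n A i else 0) :
    UniqueRealization n A := by
  have hcap : ∀ B : Fin n → Fin n → ℕ, ZeroOne n B → ZeroDiag n B →
      outdeg n B = outdeg n A → indeg n B = indeg n A →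
      ∀ k ≤ n, ∀ j, prefixIndeg B k j = prefixCap (indeg n A) k j := by
    intro B hB01 hBdiag hout hin k hk j
    rcases Nat.eq_zero_or_pos k with rfl | hk1
    · simp [prefixIndeg, prefixCap]
    rw [← hin]
    exact prefixIndeg_eq_prefixCap_of_sum_eq hB01 hBdiag hk (by rw [hin, hout]; exact h4 k hk1 hk) j
  intro B hB01 hBdiag hout hin
  exact eq_of_prefixIndeg_eq fun k hk j =>
    (hcap B hB01 hBdiag (funext hout) (funext hin) k hk j).trans
      (hcap A h01 hdiag rfl rfl k hk j).symm

end PrefixIndeg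

/-- Theorem 1: the four characterizations of threshold digraphs are
equivalent, for a digraph whose degree sequence is in positive lexicographic order. -/
theorem stmt4 (n : ℕ) (A : Fin n → Fin n → ℕ)
    (h01 : ZeroOne n A) (hdiag : ZeroDiag n A)
    (hlex : PosLex n (outdeg n A) (indeg n A)) :
    [UniqueRealization n A,
     ¬ HasTwoSwitch n A ∧ ¬ HasInducedC3 n A,
     Nested n A,
     ∀ k : ℕ, 1 ≤ k → k ≤ n →
       (∑ i : Fin n, if (i : ℕ) < k then min (indeg n A i) (k - 1) else min (indeg n A i) k)
         = ∑ i : Fin n, if (i : ℕ) < k then outdeg n A i else 0].TFAE := by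
  tfae_have 1 → 2 := fun hU => ⟨not_hasTwoSwitch_of_uniqueRealization h01 hdiag hU,
    not_hasInducedC3_of_uniqueRealization h01 hdiag hU⟩
  tfae_have 2 → 3 := fun h => nested_of_not_hasTwoSwitch h01 hdiag hlex h.1 h.2
  tfae_have 3 → 4 := fun h3 k _ hk => by
    rw [← sum_prefixIndeg]
    exact sum_congr rfl fun j _ => (prefixIndeg_eq_prefixCap_of_nested h01 hdiag h3 hk j).symm
  tfae_have 4 → 1 := uniqueRealization_of_sum_prefixCap h01 hdiag
  tfae_finish
end

section
/- Given a sequence β = (β_1,…,β_n) of integers with 0 ≤ β_j < n for all j, define the n×n matrix A = [a_ij] by a_ij = 1 if (i < j and i ≤ β_j) or (i > j and i ≤ β_j + 1), and a_ij = 0 otherwise. Then A is a zero-one matrix with zero diagonal which is the adjacency matrix of a threshold digraph, i.e., the digraph it defines has no 2-switch and no induced directed 3-cycle. -/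
/-
A matrix whose columns are down-closed off the diagonal (`Nested`: an arc `j → k` forces
the arc `i → k` for every earlier `i`) is threshold. A 2-switch `w → x`, `y → z` would
have the earlier of `w, y` lose the arc its partner has; along an induced 3-cycle the
same argument forces `y < x < z < y`. The matrix built from `β` is nested because both
defining conditions on `i` are bounds of the form `i < β j + [i > j]`.
-/

section Nested

variable {n : ℕ} {A : Fin n → Fin n → ℕ}

lemma Nested.not_hasTwoSwitch (hA : Nested n A) : ¬ HasTwoSwitch n A := by
  rintro ⟨w, x, y, z, hwx, hwy, hwz, hxy, -, hyz, hwx1, hyz1, hwz0, hyx0⟩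
  rcases hwy.lt_or_gt with h | h
  · simp [hA w y z hwy hwz hyz h hyz1] at hwz0
  · simp [hA y w x hwy.symm hxy.symm hwx h hwx1] at hyx0

lemma Nested.not_hasInducedC3 (hA : Nested n A) : ¬ HasInducedC3 n A := by
  rintro ⟨x, y, z, hxy, hxz, hyz, hxy1, hyz1, hzx1, hyx0, hzy0, hxz0⟩
  have y_lt_x : y < x := hxy.lt_or_gt.resolve_left fun h => by
    simp [hA x y z hxy hxz hyz h hyz1] at hxz0
  have x_lt_z : x < z := hxz.symm.lt_or_gt.resolve_left fun h => by
    simp [hA z x y hxz.symm hyz.symm hxy h hxy1] at hzy0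
  have z_lt_y : z < y := hyz.symm.lt_or_gt.resolve_right fun h => by
    simp [hA y z x hyz hxy.symm hxz.symm h hzx1] at hyx0
  exact lt_asymm (y_lt_x.trans x_lt_z) z_lt_y

end Nested

section SeqMatrix

variable {n : ℕ} (β : Fin n → ℕ)

/-- The 0-based form of the paper's rule: `a_ij = 1` iff `i < j ∧ i ≤ β_j` or
`i > j ∧ i ≤ β_j + 1` in 1-based indices. -/
def seqMatrix (i j : Fin n) : ℕ :=
  if ((i : ℕ) < (j : ℕ) ∧ (i : ℕ) < β j) ∨ ((j : ℕ) < (i : ℕ) ∧ (i : ℕ) ≤ β j) then 1 else 0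

lemma seqMatrix_zeroOne : ZeroOne n (seqMatrix β) := fun i j => by
  unfold seqMatrix
  split_ifs <;> simp

lemma seqMatrix_zeroDiag : ZeroDiag n (seqMatrix β) := fun i => by
  simp [seqMatrix]

lemma seqMatrix_nested : Nested n (seqMatrix β) := by
  intro i j k hij hik hjk hlt hjk1
  have hik' : (i : ℕ) ≠ k := Fin.val_ne_of_ne hik
  have hlt' : (i : ℕ) < j := hlt
  unfold seqMatrix at hjk1 ⊢
  split_ifs at hjk1 with h
  · rw [if_pos]
    omega

end SeqMatrix

theorem stmt6_general (n : ℕ) (β : Fin n → ℕ)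
    (A : Fin n → Fin n → ℕ)
    (hA : ∀ i j : Fin n, A i j =
      if ((i : ℕ) < (j : ℕ) ∧ (i : ℕ) < β j) ∨ ((j : ℕ) < (i : ℕ) ∧ (i : ℕ) ≤ β j)
      then 1 else 0) :
    ZeroOne n A ∧ ZeroDiag n A ∧ ¬ HasTwoSwitch n A ∧ ¬ HasInducedC3 n A := by
  obtain rfl : A = seqMatrix β := funext fun i => funext (hA i)
  exact ⟨seqMatrix_zeroOne β, seqMatrix_zeroDiag β,
    (seqMatrix_nested β).not_hasTwoSwitch, (seqMatrix_nested β).not_hasInducedC3⟩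

/-- Corollary 2, first part: the matrix constructed from a sequence
`β` with `0 ≤ β j < n` (here via the 0-based translation of the 1-based rule
`a_{ij} = 1` iff (`i < j` and `i ≤ β_j`) or (`i > j` and `i ≤ β_j + 1`))
is the adjacency matrix of a threshold digraph. -/
theorem stmt6 (n : ℕ) (β : Fin n → ℕ) (hβ : ∀ j, β j < n)
    (A : Fin n → Fin n → ℕ)
    (hA : ∀ i j : Fin n, A i j =
      if ((i : ℕ) < (j : ℕ) ∧ (i : ℕ) < β j) ∨ ((j : ℕ) < (i : ℕ) ∧ (i : ℕ) ≤ β j)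
      then 1 else 0) :
    ZeroOne n A ∧ ZeroDiag n A ∧ ¬ HasTwoSwitch n A ∧ ¬ HasInducedC3 n A :=
  stmt6_general n β A hA
end

section
/- Let A = [a_ij] be an n×n zero-one matrix with zero diagonal, with row sums α_i^+ = Σ_j a_ij and column sums α_j^- = Σ_i a_ij (no ordering assumption needed). Then Σ_{i=1}^n α_i^+ = Σ_{i=1}^n α_i^- and for every k with 1 ≤ k ≤ n, Σ_{i=1}^k min(α_i^-, k−1) + Σ_{i=k+1}^n min(α_i^-, k) ≥ Σ_{i=1}^k α_i^+. -/
open Finset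

/-!
Counting the arcs from a set `S` of vertices into a vertex `j` column by column: there are
at most `α_j^-` of them, and, since there are no loops and no multiple arcs, at most
`|S \ {j}|`. Summing over `j` bounds `Σ_{i ∈ S} α_i^+`; for `S = {v_1, …, v_k}` this is the
Fulkerson–Chen inequality.
-/

section Degrees

variable {n : ℕ} {A : Fin n → Fin n → ℕ}

theorem sum_outdeg_eq_sum_indeg (A : Fin n → Fin n → ℕ) :
    ∑ i, outdeg n A i = ∑ j, indeg n A j :=
  sum_comm

theorem sum_outdeg_eq_sum_sum_col (S : Finset (Fin n)) :
    ∑ i ∈ S, outdeg n A i = ∑ j, ∑ i ∈ S, A i j :=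
  sum_comm

theorem sum_col_le_indeg (S : Finset (Fin n)) (j : Fin n) :
    ∑ i ∈ S, A i j ≤ indeg n A j :=
  sum_le_sum_of_subset (subset_univ S)

theorem sum_col_le_card_erase (h01 : ZeroOne n A) (hdiag : ZeroDiag n A)
    (S : Finset (Fin n)) (j : Fin n) :
    ∑ i ∈ S, A i j ≤ #(S.erase j) := by
  rw [← sum_erase S (f := fun i => A i j) (hdiag j), card_eq_sum_ones]
  exact sum_le_sum fun i _ => by rcases h01 i j with h | h <;> omega

theorem sum_outdeg_le_sum_min_indeg (h01 : ZeroOne n A) (hdiag : ZeroDiag n A)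
    (S : Finset (Fin n)) :
    ∑ i ∈ S, outdeg n A i ≤ ∑ j, min (indeg n A j) #(S.erase j) := by
  rw [sum_outdeg_eq_sum_sum_col]
  exact sum_le_sum fun j _ =>
    le_min (sum_col_le_indeg S j) (sum_col_le_card_erase h01 hdiag S j)

end Degrees

theorem card_erase_filter_val_lt {n k : ℕ} (hk : k ≤ n) (j : Fin n) :
    #((univ.filter fun i : Fin n => (i : ℕ) < k).erase j) =
      if (j : ℕ) < k then k - 1 else k := by
  have hcard : #(univ.filter fun i : Fin n => (i : ℕ) < k) = k := by
    rw [Fin.card_filter_val_lt, min_eq_right hk]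
  split_ifs with hj
  · rw [card_erase_of_mem (by simpa using hj), hcard]
  · rw [erase_eq_of_notMem (by simpa using hj), hcard]

/-- any zero-one matrix with zero diagonal satisfies the Fulkerson–Chen
inequalities (and equal total row and column sums), with no ordering assumption. -/
theorem stmt10 (n : ℕ) (A : Fin n → Fin n → ℕ)
    (h01 : ZeroOne n A) (hdiag : ZeroDiag n A) :
    (∑ i, outdeg n A i) = (∑ i, indeg n A i) ∧
    ∀ k : ℕ, 1 ≤ k → k ≤ n →
      (∑ i : Fin n, if (i : ℕ) < k then outdeg n A i else 0) ≤
        ∑ i : Fin n, if (i : ℕ) < k then min (indeg n A i) (k - 1)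
          else min (indeg n A i) k := by
  refine ⟨sum_outdeg_eq_sum_indeg A, fun k _ hkn => ?_⟩
  rw [← sum_filter]
  refine (sum_outdeg_le_sum_min_indeg h01 hdiag _).trans (le_of_eq (sum_congr rfl fun j _ => ?_))
  rw [card_erase_filter_val_lt hkn j, apply_ite (min (indeg n A j))]
end
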